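/- Fix an FU k and an opponent power vector p_{-k} with nonnegative entries. If the price satisfies λ_k·h_{k,0} < W·G_k(p_{-k})/p_a, then every maximizer of p_k ↦ u_k(p_k, p_{-k}) over [0, p_k^max] is strictly positive; i.e., the best response satisfies p̂_k(p_{-k}) > 0 (positivity of the best response). -/

import Mathlib

open Real Finset

/-!
Along the `k`-th coordinate the payoff is `y ↦ W log (1 + G y) / (y + p_a) - λ_k h_{k,0} y`,
which has slope `W G / p_a - λ_k h_{k,0} > 0` at `y = 0`. A maximizer over `[0, p_k^max]`
sitting at the left endpoint `0` would force this one-sided slope to be `≤ 0`.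
-/

/-- SINR of FU `k`. -/
noncomputable def sinr {K : ℕ} (hff : Fin K → Fin K → ℝ) (h0f N : Fin K → ℝ)
    (p0 : ℝ) (k : Fin K) (p : Fin K → ℝ) : ℝ :=
  hff k k * p k / (N k + h0f k * p0 + ∑ j ∈ Finset.univ.erase k, hff j k * p j)

/-- Net payoff of FU `k`. -/
noncomputable def payoff {K : ℕ} (W pa p0 : ℝ) (hff : Fin K → Fin K → ℝ)
    (h0f hf0 N lam : Fin K → ℝ) (k : Fin K) (p : Fin K → ℝ) : ℝ :=
  W * Real.log (1 + sinr hff h0f N p0 k p) / (p k + pa) - lam k * hf0 k * p k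

/-- `G_k(p_{-k})`. -/
noncomputable def Gk {K : ℕ} (hff : Fin K → Fin K → ℝ) (h0f N : Fin K → ℝ)
    (p0 : ℝ) (k : Fin K) (p : Fin K → ℝ) : ℝ :=
  hff k k / (N k + h0f k * p0 + ∑ j ∈ Finset.univ.erase k, hff j k * p j)

theorem HasDerivWithinAt.nonpos_of_isMaxOn_Icc_left {f : ℝ → ℝ} {f' a b : ℝ} (hab : a < b)
    (hf : HasDerivWithinAt f f' (Set.Icc a b) a) (hmax : IsMaxOn f (Set.Icc a b) a) :
    f' ≤ 0 := by
  have hcone : b - a ∈ posTangentConeAt (Set.Icc a b) a :=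
    sub_mem_posTangentConeAt_of_segment_subset ((convex_Icc a b).segment_subset
      (Set.left_mem_Icc.2 hab.le) (Set.right_mem_Icc.2 hab.le))
  have := hmax.localize.hasFDerivWithinAt_nonpos hf hcone
  rw [ContinuousLinearMap.toSpanSingleton_apply, smul_eq_mul] at this
  exact nonpos_of_mul_nonpos_right this (sub_pos.2 hab)

theorem hasDerivAt_log_div_sub_mul_at_zero {W G pa c : ℝ} (hpa : pa ≠ 0) :
    HasDerivAt (fun y => W * log (1 + G * y) / (y + pa) - c * y) (W * G / pa - c) 0 := by
  have hlog : HasDerivAt (fun y => log (1 + G * y)) G 0 := by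
    simpa using (((hasDerivAt_id 0).const_mul G).const_add 1).log (by simp)
  have := ((hlog.const_mul W).div ((hasDerivAt_id 0).add_const pa) (by simpa using hpa)).sub
    ((hasDerivAt_id 0).const_mul c)
  refine this.congr_deriv ?_
  simp only [id_eq, zero_add, mul_zero, add_zero, log_one, mul_one, sub_zero, sub_left_inj]
  field_simp

theorem Gk_update_self {K : ℕ} (hff : Fin K → Fin K → ℝ) (h0f N : Fin K → ℝ) (p0 : ℝ)
    (k : Fin K) (p : Fin K → ℝ) (y : ℝ) :
    Gk hff h0f N p0 k (Function.update p k y) = Gk hff h0f N p0 k p := by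
  unfold Gk
  congr 2
  refine Finset.sum_congr rfl fun j hj => ?_
  rw [Function.update_of_ne (Finset.ne_of_mem_erase hj)]

theorem sinr_eq_Gk_mul {K : ℕ} (hff : Fin K → Fin K → ℝ) (h0f N : Fin K → ℝ) (p0 : ℝ)
    (k : Fin K) (p : Fin K → ℝ) : sinr hff h0f N p0 k p = Gk hff h0f N p0 k p * p k := by
  unfold sinr Gk
  ring

theorem payoff_update_self {K : ℕ} (W pa p0 : ℝ) (hff : Fin K → Fin K → ℝ)
    (h0f hf0 N lam : Fin K → ℝ) (k : Fin K) (p : Fin K → ℝ) (y : ℝ) :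
    payoff W pa p0 hff h0f hf0 N lam k (Function.update p k y) =
      W * log (1 + Gk hff h0f N p0 k p * y) / (y + pa) - lam k * hf0 k * y := by
  rw [payoff, sinr_eq_Gk_mul, Gk_update_self, Function.update_self]

theorem bestResponse_pos_general {K : ℕ}
    (W pa p0 : ℝ) (hpa : 0 < pa)
    (hff : Fin K → Fin K → ℝ) (h0f hf0 N lam pmax : Fin K → ℝ)
    (hpmax : ∀ i, 0 < pmax i)
    (k : Fin K) (p : Fin K → ℝ)
    (hprice : lam k * hf0 k < W * Gk hff h0f N p0 k p / pa) :
    ∀ x ∈ Set.Icc (0:ℝ) (pmax k),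
      (∀ y ∈ Set.Icc (0:ℝ) (pmax k),
        payoff W pa p0 hff h0f hf0 N lam k (Function.update p k y) ≤
          payoff W pa p0 hff h0f hf0 N lam k (Function.update p k x)) → 0 < x := by
  intro x hx hmax
  refine hx.1.lt_of_ne fun hx0 => ?_
  subst hx0
  have hmaxOn : IsMaxOn (fun y => W * log (1 + Gk hff h0f N p0 k p * y) / (y + pa) -
      lam k * hf0 k * y) (Set.Icc 0 (pmax k)) 0 := fun y hy => by
    simpa only [Set.mem_ofPred_eq, payoff_update_self] using hmax y hy
  have hslope := (hasDerivAt_log_div_sub_mul_at_zero hpa.ne').hasDerivWithinAt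
    |>.nonpos_of_isMaxOn_Icc_left (hpmax k) hmaxOn
  linarith

/-- Positivity of the best response: if `λ_k·h_{k,0} < W·G_k(p_{-k})/p_a` then every
maximizer of `p_k ↦ u_k(p_k, p_{-k})` over `[0, p_k^max]` is strictly positive. -/
theorem bestResponse_pos {K : ℕ} (hK : 1 ≤ K)
    (W pa p0 : ℝ) (hW : 0 < W) (hpa : 0 < pa) (hp0 : 0 ≤ p0)
    (hff : Fin K → Fin K → ℝ) (h0f hf0 N lam pmax : Fin K → ℝ)
    (hhff : ∀ i j, 0 < hff i j) (hh0f : ∀ i, 0 < h0f i) (hhf0 : ∀ i, 0 < hf0 i)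
    (hN : ∀ i, 0 < N i) (hlam : ∀ i, 0 ≤ lam i) (hpmax : ∀ i, 0 < pmax i)
    (k : Fin K) (p : Fin K → ℝ) (hp : ∀ i, i ≠ k → 0 ≤ p i)
    (hprice : lam k * hf0 k < W * Gk hff h0f N p0 k p / pa) :
    ∀ x ∈ Set.Icc (0:ℝ) (pmax k),
      (∀ y ∈ Set.Icc (0:ℝ) (pmax k),
        payoff W pa p0 hff h0f hf0 N lam k (Function.update p k y) ≤
          payoff W pa p0 hff h0f hf0 N lam k (Function.update p k x)) → 0 < x :=
  bestResponse_pos_general W pa p0 hpa hff h0f hf0 N lam pmax hpmax k p hprice
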